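/- Let p > 1, 0 < α ≤ 1, 0 < β ≤ 1, and −1 < μ, ν < p−1. For every integer n ≥ 2, Σ_{m=2}^∞ [ (log m)^{α−1} / ( m · ((log m)^α + (log n)^β)^{1+(μ−ν)/p} ) ] · (log n)^{β(p−1−ν)/p} / (log m)^{α(p−1−μ)/p} ≤ (1/α) · B((1+μ)/p, (p−1−ν)/p), where B denotes the Beta function and p' is the conjugate exponent of p. -/

import Mathlib

open scoped ENNReal

/-- The Beta function `B(u, v) = ∫_0^∞ t^{u-1} / (1+t)^{u+v} dt`. -/
noncomputable def betaFn (u v : ℝ) : ℝ :=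
  ∫ t in Set.Ioi (0 : ℝ), t ^ (u - 1) / (1 + t) ^ (u + v)

/-!
With `a = (1+μ)/p`, `b = (p-1-ν)/p` and `c = (log n)^β`, the `m`-th term is `k(m)` for the kernel
`k(x) = c^b (log x)^{αa-1} / (x ((log x)^α + c)^{a+b})`, which decreases on `(1, ∞)` because
`αa < 1`. Hence the sum is at most `∫_1^∞ k`, and the substitution `x = exp ((c u)^{1/α})` turns
this integral into `(1/α) ∫_0^∞ u^{a-1} / (1+u)^{a+b} du = (1/α) B(a, b)`.
-/

open Real Set MeasureTheory

lemma integrableOn_Ioi_rpow_div_one_add_rpow {a b : ℝ} (ha : 0 < a) (hb : 0 < b) :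
    IntegrableOn (fun t : ℝ => t ^ (a - 1) / (1 + t) ^ (a + b)) (Ioi 0) := by
  have hmeas : AEStronglyMeasurable (fun t : ℝ => t ^ (a - 1) / (1 + t) ^ (a + b)) :=
    (by fun_prop : Measurable fun t : ℝ => t ^ (a - 1) / (1 + t) ^ (a + b)).aestronglyMeasurable
  rw [← Ioc_union_Ioi_eq_Ioi zero_le_one]
  refine IntegrableOn.union ?_ ?_
  · have hdom : IntegrableOn (fun t : ℝ => t ^ (a - 1)) (Ioc 0 1) := by
      rw [← intervalIntegrable_iff_integrableOn_Ioc_of_le zero_le_one]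
      exact intervalIntegral.intervalIntegrable_rpow' (by linarith)
    refine hdom.mono' hmeas.restrict ?_
    filter_upwards [ae_restrict_mem measurableSet_Ioc] with t ht
    have ht0 : 0 < t := ht.1
    rw [norm_of_nonneg (by positivity)]
    exact div_le_self (by positivity) (one_le_rpow (by linarith) (by linarith))
  · have hdom : IntegrableOn (fun t : ℝ => t ^ (-1 - b)) (Ioi 1) :=
      integrableOn_Ioi_rpow_of_lt (by linarith) one_pos
    refine hdom.mono' hmeas.restrict ?_
    filter_upwards [ae_restrict_mem measurableSet_Ioi] with t (ht : 1 < t)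
    have ht0 : 0 < t := by linarith
    rw [norm_of_nonneg (by positivity)]
    calc t ^ (a - 1) / (1 + t) ^ (a + b) ≤ t ^ (a - 1) / t ^ (a + b) := by
          gcongr
          linarith
      _ = t ^ (-1 - b) := by rw [← rpow_sub ht0]; ring_nf

lemma tsum_le_setLIntegral_Ioi_of_antitoneOn {f : ℝ → ℝ≥0∞} {a : ℝ}
    (hf : AntitoneOn f (Ioi a)) :
    ∑' n : ℕ, f (a + n + 1) ≤ ∫⁻ x in Ioi a, f x := by
  have hdisj : Pairwise (Function.onFun Disjoint fun n : ℕ => Ioc (a + n) (a + n + 1)) :=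
    fun i j hij => pairwise_disjoint_Ioc_add_intCast a (Nat.cast_injective.ne hij : (i : ℤ) ≠ j)
  calc ∑' n : ℕ, f (a + n + 1) ≤ ∑' n : ℕ, ∫⁻ x in Ioc (a + n) (a + n + 1), f x := by
        refine ENNReal.tsum_le_tsum fun n => ?_
        calc f (a + n + 1) = ∫⁻ _ in Ioc (a + n) (a + n + 1), f (a + n + 1) := by
              simp [Real.volume_Ioc]
          _ ≤ ∫⁻ x in Ioc (a + n) (a + n + 1), f x := by
              refine setLIntegral_mono' measurableSet_Ioc fun x hx => hf ?_ ?_ hx.2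
              · exact lt_of_le_of_lt (by simp) hx.1
              · simp only [mem_Ioi]; linarith [(Nat.cast_nonneg n : (0 : ℝ) ≤ n)]
    _ = ∫⁻ x in ⋃ n : ℕ, Ioc (a + n) (a + n + 1), f x :=
        (lintegral_iUnion (fun _ => measurableSet_Ioc) hdisj f).symm
    _ ≤ ∫⁻ x in Ioi a, f x :=
        lintegral_mono_set <| iUnion_subset fun n x hx =>
          lt_of_le_of_lt (by simp) hx.1

noncomputable def logBetaKernel (α a b c x : ℝ) : ℝ :=
  c ^ b * log x ^ (α * a - 1) / (x * (log x ^ α + c) ^ (a + b))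

section
variable {α a b c : ℝ}

lemma antitoneOn_logBetaKernel (hα : 0 ≤ α) (hαa : α * a ≤ 1) (hab : 0 ≤ a + b) (hc : 0 ≤ c) :
    AntitoneOn (logBetaKernel α a b c) (Ioi 1) := by
  intro x (hx : 1 < x) y (hy : 1 < y) hxy
  have hlogx : 0 < log x := log_pos hx
  have hlog : log x ≤ log y := log_le_log (by linarith) hxy
  unfold logBetaKernel
  gcongr ?_ / ?_
  · exact mul_le_mul_of_nonneg_left (rpow_le_rpow_of_nonpos hlogx hlog (by linarith))
      (by positivity)
  · gcongr

lemma abs_deriv_mul_logBetaKernel_exp_rpow (hα : 0 < α) (hc : 0 < c) {u : ℝ} (hu : 0 < u) :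
    |exp ((c * u) ^ (1 / α)) * (1 / α * (c * u) ^ (1 / α - 1) * c)| *
        logBetaKernel α a b c (exp ((c * u) ^ (1 / α)))
      = 1 / α * (u ^ (a - 1) / (1 + u) ^ (a + b)) := by
  have hcu : 0 < c * u := mul_pos hc hu
  set y := (c * u) ^ (1 / α)
  have hyα : y ^ α = c * u := by
    rw [← rpow_mul hcu.le, one_div_mul_cancel hα.ne', rpow_one]
  have hy : y ^ (α * a - 1) * (c * u) ^ (1 / α - 1) = c ^ (a - 1) * u ^ (a - 1) := by
    rw [← rpow_mul hcu.le, ← rpow_add hcu, ← mul_rpow hc.le hu.le]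
    congr 1
    field_simp
    ring
  have hden : (y ^ α + c) ^ (a + b) = c ^ (a + b) * (1 + u) ^ (a + b) := by
    rw [hyα, ← mul_rpow hc.le (by linarith)]
    ring_nf
  have hcpow : c * c ^ b * c ^ (a - 1) = c ^ (a + b) := by
    rw [mul_comm c, ← rpow_add_one hc.ne', ← rpow_add hc]
    ring_nf
  unfold logBetaKernel
  rw [log_exp, hden, abs_of_pos (by positivity)]
  calc _ = 1 / α * (c * c ^ b * (y ^ (α * a - 1) * (c * u) ^ (1 / α - 1))) /
        (c ^ (a + b) * (1 + u) ^ (a + b)) := by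
        field_simp
    _ = _ := by
        rw [hy, ← hcpow]
        field_simp

lemma strictMonoOn_exp_rpow_mul (hα : 0 < α) (hc : 0 < c) :
    StrictMonoOn (fun u => exp ((c * u) ^ (1 / α))) (Ioi 0) := fun u hu _ _ huv =>
  exp_lt_exp.2 <| rpow_lt_rpow (mul_pos hc hu).le (mul_lt_mul_of_pos_left huv hc) (by positivity)

lemma image_exp_rpow_mul_Ioi_zero (hα : 0 < α) (hc : 0 < c) :
    (fun u => exp ((c * u) ^ (1 / α))) '' Ioi 0 = Ioi 1 := by
  ext x
  constructor
  · rintro ⟨u, hu, rfl⟩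
    exact one_lt_exp_iff.2 (rpow_pos_of_pos (mul_pos hc hu) _)
  · intro (hx : 1 < x)
    have hlog : 0 < log x := log_pos hx
    refine ⟨log x ^ α / c, div_pos (rpow_pos_of_pos hlog _) hc, ?_⟩
    simp only
    rw [mul_div_cancel₀ _ hc.ne', ← rpow_mul hlog.le, mul_one_div_cancel hα.ne', rpow_one,
      exp_log (by linarith)]

lemma lintegral_Ioi_one_logBetaKernel (hα : 0 < α) (ha : 0 < a) (hb : 0 < b) (hc : 0 < c) :
    ∫⁻ x in Ioi 1, ENNReal.ofReal (logBetaKernel α a b c x)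
      = ENNReal.ofReal (1 / α * betaFn a b) := by
  have hderiv : ∀ u ∈ Ioi (0 : ℝ), HasDerivWithinAt (fun u => exp ((c * u) ^ (1 / α)))
      (exp ((c * u) ^ (1 / α)) * (1 / α * (c * u) ^ (1 / α - 1) * c)) (Ioi 0) u := by
    intro u (hu : 0 < u)
    have hlin : HasDerivAt (fun v : ℝ => c * v) c u := by
      simpa using (hasDerivAt_id u).const_mul c
    exact ((hasDerivAt_rpow_const (Or.inl (mul_pos hc hu).ne')).comp u hlin).exp.hasDerivWithinAt
  rw [← image_exp_rpow_mul_Ioi_zero hα hc, lintegral_image_eq_lintegral_abs_deriv_mul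
    measurableSet_Ioi hderiv (strictMonoOn_exp_rpow_mul hα hc).injOn]
  calc _ = ∫⁻ u in Ioi 0, ENNReal.ofReal (1 / α * (u ^ (a - 1) / (1 + u) ^ (a + b))) := by
        refine setLIntegral_congr_fun measurableSet_Ioi fun u (hu : 0 < u) => ?_
        rw [← ENNReal.ofReal_mul (abs_nonneg _), abs_deriv_mul_logBetaKernel_exp_rpow hα hc hu]
    _ = ENNReal.ofReal (1 / α * betaFn a b) := by
        rw [← ofReal_integral_eq_lintegral_ofReal
          ((integrableOn_Ioi_rpow_div_one_add_rpow ha hb).const_mul _), integral_const_mul]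
        · rfl
        · filter_upwards [ae_restrict_mem measurableSet_Ioi] with u (hu : 0 < u)
          positivity

end

lemma summand_eq_logBetaKernel {p α β μ ν L x : ℝ} (hp : p ≠ 0) (hL : 0 ≤ L) (hx : 0 < log x) :
    log x ^ (α - 1) / (x * (log x ^ α + L ^ β) ^ (1 + (μ - ν) / p)) *
        (L ^ (β * (p - 1 - ν) / p) / log x ^ (α * (p - 1 - μ) / p))
      = logBetaKernel α ((1 + μ) / p) ((p - 1 - ν) / p) (L ^ β) x := by
  have hLpow : L ^ (β * (p - 1 - ν) / p) = (L ^ β) ^ ((p - 1 - ν) / p) := by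
    rw [← rpow_mul hL, mul_div_assoc]
  have hlogpow : log x ^ (α - 1) / log x ^ (α * (p - 1 - μ) / p)
      = log x ^ (α * ((1 + μ) / p) - 1) := by
    rw [← rpow_sub hx]
    congr 1
    field_simp
    ring
  have hexp : 1 + (μ - ν) / p = (1 + μ) / p + (p - 1 - ν) / p := by
    field_simp
    ring
  rw [logBetaKernel, ← hlogpow, hLpow, hexp]
  ring

theorem lemma_F_bound_general
    (p α β μ ν : ℝ) (hp : 1 < p)
    (hα0 : 0 < α) (hα1 : α ≤ 1)
    (hμ1 : -1 < μ) (hμ2 : μ < p - 1) (hν2 : ν < p - 1)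
    (n : ℕ) (hn : 2 ≤ n) :
    ∑' m : ℕ,
        ENNReal.ofReal
          (Real.log ((m : ℝ) + 2) ^ (α - 1) /
              (((m : ℝ) + 2) *
                (Real.log ((m : ℝ) + 2) ^ α + Real.log n ^ β) ^ (1 + (μ - ν) / p)) *
            (Real.log n ^ (β * (p - 1 - ν) / p) /
              Real.log ((m : ℝ) + 2) ^ (α * (p - 1 - μ) / p)))
      ≤ ENNReal.ofReal ((1 / α) * betaFn ((1 + μ) / p) ((p - 1 - ν) / p)) := by
  have hp0 : 0 < p := by linarith
  have hlogn : 0 < log n := log_pos (by exact_mod_cast hn)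
  have ha : 0 < (1 + μ) / p := div_pos (by linarith) hp0
  have ha1 : (1 + μ) / p < 1 := (div_lt_one hp0).2 (by linarith)
  have hb : 0 < (p - 1 - ν) / p := div_pos (by linarith) hp0
  have hc : 0 < log n ^ β := rpow_pos_of_pos hlogn β
  calc _ = ∑' m : ℕ, ENNReal.ofReal
        (logBetaKernel α ((1 + μ) / p) ((p - 1 - ν) / p) (log n ^ β) (1 + m + 1)) := by
        refine tsum_congr fun m => ?_
        have hlogm : 0 < log ((m : ℝ) + 2) := log_pos (by linarith [m.cast_nonneg (α := ℝ)])
        rw [summand_eq_logBetaKernel hp0.ne' hlogn.le hlogm, show (1 : ℝ) + m + 1 = m + 2 by ring]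
    _ ≤ ∫⁻ x in Ioi 1, ENNReal.ofReal
        (logBetaKernel α ((1 + μ) / p) ((p - 1 - ν) / p) (log n ^ β) x) :=
        tsum_le_setLIntegral_Ioi_of_antitoneOn <| ENNReal.ofReal_mono.comp_antitoneOn <|
          antitoneOn_logBetaKernel hα0.le (mul_le_one₀ hα1 ha.le ha1.le) (by linarith) hc.le
    _ = _ := lintegral_Ioi_one_logBetaKernel hα0 ha hb hc

/-- **(Lemma 2.1, second bound.)** For every integer `n ≥ 2`,
`F(n) = ∑_{m≥2} (log m)^{α−1} / (m ((log m)^α + (log n)^β)^{1+(μ−ν)/p}) ·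
(log n)^{β(p−1−ν)/p} / (log m)^{α(p−1−μ)/p} ≤ (1/α) B((1+μ)/p, (p−1−ν)/p)`.
(The sum is taken in `ℝ≥0∞`, so convergence is part of the claim.) -/
theorem lemma_F_bound
    (p q α β μ ν : ℝ) (hp : 1 < p) (hq : 1 / p + 1 / q = 1)
    (hα0 : 0 < α) (hα1 : α ≤ 1) (hβ0 : 0 < β) (hβ1 : β ≤ 1)
    (hμ1 : -1 < μ) (hμ2 : μ < p - 1) (hν1 : -1 < ν) (hν2 : ν < p - 1)
    (n : ℕ) (hn : 2 ≤ n) :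
    ∑' m : ℕ,
        ENNReal.ofReal
          (Real.log ((m : ℝ) + 2) ^ (α - 1) /
              (((m : ℝ) + 2) *
                (Real.log ((m : ℝ) + 2) ^ α + Real.log n ^ β) ^ (1 + (μ - ν) / p)) *
            (Real.log n ^ (β * (p - 1 - ν) / p) /
              Real.log ((m : ℝ) + 2) ^ (α * (p - 1 - μ) / p)))
      ≤ ENNReal.ofReal ((1 / α) * betaFn ((1 + μ) / p) ((p - 1 - ν) / p)) :=
  lemma_F_bound_general p α β μ ν hp hα0 hα1 hμ1 hμ2 hν2 n hn
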